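/- The canonical bristled module C is the sum of its bristle submodules; more precisely, C is the sum of the binomial(n+1, 2) bristle submodules generated by the elements d(c_i) = c_{ii} (for 1 ≤ i ≤ n) and d(c_i + c_j) = c_{ii} + c_{ij} + c_{jj} (for 1 ≤ i < j ≤ n): these elements span C₁, and their images under the maps α₁, …, α_n span C₂. -/

import Mathlib

/-!
Every `d(c)` with `c ≠ 0` spans a bristle submodule together with `c`, because
`α_r (d c) = c_r • c`. The elements `d(c_i) = c_{ii}` and
`d(c_i + c_j) - d(c_i) - d(c_j) = c_{ij}` give the standard basis of `C₁`, and
`α_i (d c_i) = c_i` gives the standard basis of `C₂`.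
-/

/-- The structure map `α_r : C₁ → C₂` of the canonical bristled module. -/
def canAlpha (k : Type*) [Field k] (n : ℕ) (r : Fin n) :
    (Sym2 (Fin n) → k) →ₗ[k] (Fin n → k) where
  toFun x i := x (s(i, r))
  map_add' _ _ := rfl
  map_smul' _ _ := rfl

/-- `d(c) = Σ_{i ≤ j} λ_i λ_j c_{ij}` for `c = Σ_i λ_i c_i`. -/
def dvec {k : Type*} [Field k] {n : ℕ} (c : Fin n → k) : Sym2 (Fin n) → k :=
  Sym2.lift ⟨fun i j => c i * c j, fun i j => mul_comm (c i) (c j)⟩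

/-- A bristle submodule of the canonical bristled module: a pair of
one-dimensional subspaces `(U₁ ⊆ C₁, U₂ ⊆ C₂)` with `α_r(U₁) ⊆ U₂` for all `r`
and `α_r(U₁) ≠ 0` for at least one `r`. -/
def IsBristleSub {k : Type*} [Field k] {n : ℕ}
    (U₁ : Submodule k (Sym2 (Fin n) → k)) (U₂ : Submodule k (Fin n → k)) : Prop :=
  (∀ r, U₁.map (canAlpha k n r) ≤ U₂) ∧
    Module.finrank k U₁ = 1 ∧ Module.finrank k U₂ = 1 ∧
    ∃ r, U₁.map (canAlpha k n r) ≠ ⊥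

/-- The set of the `binomial(n+1,2)` distinguished generators
`d(c_i) = c_{ii}` (for `i`) and `d(c_i + c_j) = c_{ii} + c_{ij} + c_{jj}`
(for `i < j`). -/
def genSet (k : Type*) [Field k] (n : ℕ) : Set (Sym2 (Fin n) → k) :=
  {x | ∃ i : Fin n, x = dvec (Pi.single i 1)} ∪
  {x | ∃ i j : Fin n, i < j ∧ x = dvec (Pi.single i 1 + Pi.single j 1)}

theorem Submodule.sSup_eq_top_of_span_eq_top {R M : Type*} [Semiring R] [AddCommMonoid M]
    [Module R M] {𝒰 : Set (Submodule R M)} {S : Set M} (hS : span R S = ⊤)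
    (h : ∀ x ∈ S, ∃ U ∈ 𝒰, x ∈ U) : sSup 𝒰 = ⊤ := by
  rw [eq_top_iff, ← hS, span_le]
  intro x hx
  obtain ⟨U, hU, hxU⟩ := h x hx
  exact mem_sSup_of_mem hU hxU

section Canonical

variable {k : Type*} [Field k] {n : ℕ}

@[simp]
theorem dvec_mk (c : Fin n → k) (a b : Fin n) : dvec c s(a, b) = c a * c b := rfl

theorem canAlpha_dvec (r : Fin n) (c : Fin n → k) : canAlpha k n r (dvec c) = c r • c := by
  funext a
  simp only [canAlpha, LinearMap.coe_mk, AddHom.coe_mk, dvec_mk, Pi.smul_apply, smul_eq_mul]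
  ring

theorem dvec_ne_zero {c : Fin n → k} (hc : c ≠ 0) : dvec c ≠ 0 := by
  obtain ⟨r, hr⟩ := Function.ne_iff.mp hc
  intro h
  have hrr : c r * c r = 0 := congrFun h s(r, r)
  exact hr (mul_self_eq_zero.mp hrr)

theorem isBristleSub_span_dvec {c : Fin n → k} (hc : c ≠ 0) :
    IsBristleSub (Submodule.span k {dvec c}) (Submodule.span k {c}) := by
  have hmap (r : Fin n) :
      (Submodule.span k {dvec c}).map (canAlpha k n r) = Submodule.span k {c r • c} := by
    rw [Submodule.map_span, Set.image_singleton, canAlpha_dvec]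
  obtain ⟨r, hr⟩ := Function.ne_iff.mp hc
  refine ⟨fun r => ?_, finrank_span_singleton (dvec_ne_zero hc), finrank_span_singleton hc,
    r, ?_⟩
  · rw [hmap, Submodule.span_singleton_le_iff_mem]
    exact Submodule.smul_mem _ _ (Submodule.mem_span_singleton_self c)
  · rw [hmap, Ne, Submodule.span_singleton_eq_bot]
    exact smul_ne_zero hr hc

theorem single_add_single_ne_zero {i j : Fin n} (hij : i ≠ j) :
    (Pi.single i 1 + Pi.single j 1 : Fin n → k) ≠ 0 := by
  intro h
  simpa [hij] using congrFun h i

theorem dvec_single (i : Fin n) : dvec (Pi.single i (1 : k)) = Pi.single s(i, i) 1 := by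
  funext p
  induction p using Sym2.ind with
  | h a b =>
    simp only [dvec_mk, Pi.single_apply]
    by_cases ha : a = i <;> by_cases hb : b = i <;> simp_all [Prod.ext_iff, eq_comm]

theorem dvec_single_add_single {i j : Fin n} (hij : i ≠ j) :
    dvec (Pi.single i (1 : k) + Pi.single j 1) =
      (Pi.single s(i, i) 1 + Pi.single s(i, j) 1 + Pi.single s(j, j) 1 :
        Sym2 (Fin n) → k) := by
  funext p
  induction p using Sym2.ind with
  | h a b =>
    simp only [dvec_mk, Pi.add_apply, Pi.single_apply]
    by_cases hai : a = i <;> by_cases hbi : b = i <;> by_cases haj : a = j <;>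
      by_cases hbj : b = j <;> simp_all [Prod.ext_iff, eq_comm]

theorem exists_isBristleSub_of_mem_genSet {x : Sym2 (Fin n) → k} (hx : x ∈ genSet k n) :
    ∃ c : Fin n → k, c ≠ 0 ∧ x = dvec c ∧
      IsBristleSub (Submodule.span k {x}) (Submodule.span k {c}) := by
  obtain ⟨i, rfl⟩ | ⟨i, j, hij, rfl⟩ := hx
  · have hc : (Pi.single i 1 : Fin n → k) ≠ 0 := Pi.single_ne_zero_iff.mpr one_ne_zero
    exact ⟨_, hc, rfl, isBristleSub_span_dvec hc⟩
  · have hc := single_add_single_ne_zero (k := k) hij.ne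
    exact ⟨_, hc, rfl, isBristleSub_span_dvec hc⟩

theorem dvec_single_add_single_mem_span_genSet {i j : Fin n} (hij : i ≠ j) :
    dvec (Pi.single i (1 : k) + Pi.single j 1) ∈ Submodule.span k (genSet k n) := by
  rcases hij.lt_or_gt with hlt | hgt
  · exact Submodule.subset_span (Or.inr ⟨i, j, hlt, rfl⟩)
  · rw [add_comm]
    exact Submodule.subset_span (Or.inr ⟨j, i, hgt, rfl⟩)

theorem span_genSet : Submodule.span k (genSet k n) = ⊤ := by
  rw [eq_top_iff, ← (Pi.basisFun k (Sym2 (Fin n))).span_eq, Submodule.span_le]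
  rintro _ ⟨p, rfl⟩
  induction p using Sym2.ind with
  | h i j =>
    have hsingle (l : Fin n) : Pi.single s(l, l) (1 : k) ∈ Submodule.span k (genSet k n) :=
      dvec_single (k := k) l ▸ Submodule.subset_span (Or.inl ⟨l, rfl⟩)
    rw [Pi.basisFun_apply, SetLike.mem_coe]
    by_cases hij : i = j
    · exact hij ▸ hsingle i
    · have hpair := dvec_single_add_single_mem_span_genSet (k := k) hij
      rw [dvec_single_add_single hij] at hpair
      convert Submodule.sub_mem _ (Submodule.sub_mem _ hpair (hsingle i)) (hsingle j) using 1
      abel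

theorem span_iUnion_image_canAlpha_genSet :
    Submodule.span k (⋃ r : Fin n, canAlpha k n r '' genSet k n) = ⊤ := by
  rw [eq_top_iff, ← (Pi.basisFun k (Fin n)).span_eq, Submodule.span_le]
  rintro _ ⟨i, rfl⟩
  apply Submodule.subset_span
  refine Set.mem_iUnion.mpr ⟨i, dvec (Pi.single i 1), Or.inl ⟨i, rfl⟩, ?_⟩
  simp [canAlpha_dvec]

end Canonical

theorem canonical_module_is_sum_of_bristle_submodules_general
    {k : Type*} [Field k] {n : ℕ} :
    sSup {U₁ : Submodule k (Sym2 (Fin n) → k) | ∃ U₂, IsBristleSub U₁ U₂} = ⊤ ∧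
    sSup {U₂ : Submodule k (Fin n → k) | ∃ U₁, IsBristleSub U₁ U₂} = ⊤ ∧
    (∀ x ∈ genSet k n, ∃ (c : Fin n → k), c ≠ 0 ∧ x = dvec c ∧
      IsBristleSub (Submodule.span k {x}) (Submodule.span k {c})) ∧
    Submodule.span k (genSet k n) = ⊤ ∧
    Submodule.span k (⋃ r : Fin n, canAlpha k n r '' genSet k n) = ⊤ := by
  refine ⟨?_, ?_, fun x hx => exists_isBristleSub_of_mem_genSet hx, span_genSet,
    span_iUnion_image_canAlpha_genSet⟩
  · refine Submodule.sSup_eq_top_of_span_eq_top span_genSet fun x hx => ?_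
    obtain ⟨c, -, -, hb⟩ := exists_isBristleSub_of_mem_genSet hx
    exact ⟨_, ⟨_, hb⟩, Submodule.mem_span_singleton_self x⟩
  · refine Submodule.sSup_eq_top_of_span_eq_top span_iUnion_image_canAlpha_genSet
      fun y hy => ?_
    obtain ⟨r, x, hx, rfl⟩ := Set.mem_iUnion.mp hy
    obtain ⟨c, -, -, hb⟩ := exists_isBristleSub_of_mem_genSet hx
    exact ⟨_, ⟨_, hb⟩, hb.1 r ⟨x, Submodule.mem_span_singleton_self x, rfl⟩⟩

/-- `C` is the sum of its bristle submodules; more precisely, `C` is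
the sum of the bristle submodules generated by the elements `d(c_i)` and
`d(c_i + c_j)`: these elements span `C₁`, and their images under `α₁, …, α_n`
span `C₂`. -/
theorem canonical_module_is_sum_of_bristle_submodules
    {k : Type*} [Field k] {n : ℕ} (hn : 1 ≤ n) :
    sSup {U₁ : Submodule k (Sym2 (Fin n) → k) | ∃ U₂, IsBristleSub U₁ U₂} = ⊤ ∧
    sSup {U₂ : Submodule k (Fin n → k) | ∃ U₁, IsBristleSub U₁ U₂} = ⊤ ∧
    (∀ x ∈ genSet k n, ∃ (c : Fin n → k), c ≠ 0 ∧ x = dvec c ∧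
      IsBristleSub (Submodule.span k {x}) (Submodule.span k {c})) ∧
    Submodule.span k (genSet k n) = ⊤ ∧
    Submodule.span k (⋃ r : Fin n, canAlpha k n r '' genSet k n) = ⊤ :=
  canonical_module_is_sum_of_bristle_submodules_general
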